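/- For every odd g ≥ 1 one has the equality of ideals J_g^- = J_{g−1}^- in ℂ[α,γ]; equivalently, ζ_{g−1}^- ∈ J_g^-. -/

import Mathlib

open MvPolynomial

/-- ζ_k^- ∈ ℂ[α,γ] (variables: X 0 = α, X 1 = γ):
    ζ_{k+1}^- = α ζ_k^- + 2k(k−1) γ ζ_{k−2}^- for k even, and
    ζ_{k+1}^- = α ζ_k^- − 16k² ζ_{k−1}^- + 2k(k−1) γ ζ_{k−2}^- for k odd. -/
noncomputable def zm : ℕ → MvPolynomial (Fin 2) ℂ
  | 0 => 1
  | 1 => X 0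
  | 2 => X 0 * zm 1 - C 16 * zm 0
  | (n + 3) =>
      if n % 2 = 0 then
        X 0 * zm (n + 2) + C (2 * ((n : ℂ) + 2) * ((n : ℂ) + 1)) * X 1 * zm n
      else
        X 0 * zm (n + 2) - C (16 * ((n : ℂ) + 2) ^ 2) * zm (n + 1)
          + C (2 * ((n : ℂ) + 2) * ((n : ℂ) + 1)) * X 1 * zm n

/-- ζ_k^- for an integer index k, with ζ_k^- = 0 for k < 0. -/
noncomputable def zmZ (k : ℤ) : MvPolynomial (Fin 2) ℂ :=
  if k < 0 then 0 else zm k.toNat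

/-- J_g^- = (ζ_g^-, ζ_{g+1}^-, ζ_{g+2}^-) ⊆ ℂ[α,γ]. -/
noncomputable def Jm (g : ℕ) : Ideal (MvPolynomial (Fin 2) ℂ) :=
  Ideal.span {zm g, zm (g + 1), zm (g + 2)}

/-!
Write α = X 0, γ = X 1. By induction on n we show γ^j ζ_{2i} ∈ J_{2n+1} whenever i + j = n; the
case j = 0 is ζ_{2n} ∈ J_{2n+1}. Multiplication by γ² maps J_{2n-1} into J_{2n+1}, and together with
ζ_{2n+2}, γ ζ_{2n} ∈ J_{2n+1} this gives the same membership along i + j = n + 1.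

Starting from ζ_{2n+1} ∈ J_{2n+1} and eliminating with the two recurrences, one gets relations
p(α) γ^j ζ_{2i} + q(α) γ^j ζ_{2i+1} ∈ J_{2n+1} for i + j = n, with real polynomials p, q of
controlled sign on each half-line. Going back up in i, γ^j ζ_{2i} is multiplied into J_{2n+1}
both by p + α q and by α² − 16(2i+1)²; the sign control makes these two polynomials coprime.
-/

open scoped Polynomial

theorem mem_of_isCoprime {A : Type*} [CommRing A] {J : Ideal A} {u v t : A} (h : IsCoprime u v)
    (hu : u * t ∈ J) (hv : v * t ∈ J) : t ∈ J := by
  obtain ⟨a, b, hab⟩ := h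
  rw [show t = a * (u * t) + b * (v * t) by linear_combination -t * hab]
  exact J.add_mem (J.mul_mem_left a hu) (J.mul_mem_left b hv)

theorem isCoprime_X_sq_sub_C_sq {K : Type*} [Field K] {w : K[X]} {c : K}
    (h₁ : w.eval c ≠ 0) (h₂ : w.eval (-c) ≠ 0) :
    IsCoprime w (Polynomial.X ^ 2 - Polynomial.C (c ^ 2)) := by
  have coprime_of_eval {b : K} (hb : w.eval b ≠ 0) : IsCoprime w (Polynomial.X - Polynomial.C b) :=
    ((Polynomial.irreducible_X_sub_C b).coprime_iff_not_dvd.2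
      (mt Polynomial.dvd_iff_isRoot.1 hb)).symm
  rw [show Polynomial.X ^ 2 - Polynomial.C (c ^ 2)
      = (Polynomial.X - Polynomial.C c) * (Polynomial.X - Polynomial.C (-c)) by
    simp only [map_pow, map_neg]; ring]
  exact (coprime_of_eval h₁).mul_right (coprime_of_eval h₂)

def SignPattern (j : ℕ) (p q : ℝ[X]) : Prop :=
  (∀ β > 0, 0 ≤ (-1) ^ j * p.eval β ∧ 0 < (-1) ^ j * q.eval β) ∧
    ∀ β < 0, p.eval β ≤ 0 ∧ 0 < q.eval β

namespace SignPattern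

theorem zero_one : SignPattern 0 0 1 :=
  ⟨fun _ _ => by simp, fun _ _ => by simp⟩

theorem step {j : ℕ} {p q : ℝ[X]} (h : SignPattern j p q) {e k o : ℝ}
    (he : 0 < e) (hk : 0 < k) (ho : 0 < o) :
    SignPattern (j + 1) (-(Polynomial.C e * (Polynomial.X * p + Polynomial.C k * q)))
      (-(Polynomial.C o * (p + Polynomial.X * q))) := by
  refine ⟨fun β hβ => ?_, fun β hβ => ?_⟩ <;>
    simp only [Polynomial.eval_neg, Polynomial.eval_mul, Polynomial.eval_add, Polynomial.eval_C,
      Polynomial.eval_X, pow_succ]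
  · obtain ⟨hp, hq⟩ := h.1 β hβ
    constructor
    · linarith [mul_pos he (add_pos_of_nonneg_of_pos (mul_nonneg hβ.le hp) (mul_pos hk hq))]
    · linarith [mul_pos ho (add_pos_of_nonneg_of_pos hp (mul_pos hβ hq))]
  · obtain ⟨hp, hq⟩ := h.2 β hβ
    constructor
    · linarith [mul_pos he (add_pos_of_nonneg_of_pos (mul_nonneg_of_nonpos_of_nonpos hβ.le hp)
        (mul_pos hk hq))]
    · linarith [mul_pos ho (add_pos_of_nonneg_of_pos (neg_nonneg.2 hp) (mul_pos (neg_pos.2 hβ) hq))]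

theorem eval_ne_zero {j : ℕ} {p q : ℝ[X]} (h : SignPattern j p q) {β : ℝ} (hβ : β ≠ 0) :
    (p + Polynomial.X * q).eval β ≠ 0 := by
  simp only [Polynomial.eval_add, Polynomial.eval_mul, Polynomial.eval_X]
  rcases hβ.lt_or_gt with hβ | hβ
  · obtain ⟨hp, hq⟩ := h.2 β hβ
    linarith [mul_neg_of_neg_of_pos hβ hq]
  · obtain ⟨hp, hq⟩ := h.1 β hβ
    have : 0 < (-1) ^ j * (p.eval β + β * q.eval β) := by linarith [mul_pos hβ hq]
    exact right_ne_zero_of_mul this.ne'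

end SignPattern

section Elimination

variable {A : Type*} [CommRing A] [Algebra ℝ A] {J : Ideal A} {a g x₀ x₁ x₂ : A} {e o : ℝ}
  {p q : ℝ[X]}

theorem mem_of_algebraMap_mul_mem [Nontrivial A] {r : ℝ} {x : A} (hr : r ≠ 0)
    (h : algebraMap ℝ A r * x ∈ J) : x ∈ J :=
  (J.unit_mul_mem_iff_mem ((IsUnit.mk0 r hr).map _)).1 h

theorem elim_step_mem {x₃ x₄ : A} {k : ℝ}
    (h₃ : x₃ = a * x₂ + algebraMap ℝ A e * (g * x₀))
    (h₄ : x₄ = a * x₃ - algebraMap ℝ A k * x₂ + algebraMap ℝ A o * (g * x₁))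
    (hpq : Polynomial.aeval a p * x₂ + Polynomial.aeval a q * x₃ ∈ J) (hx₄ : x₄ ∈ J) :
    Polynomial.aeval a (-(Polynomial.C e * (Polynomial.X * p + Polynomial.C k * q))) * (g * x₀)
      + Polynomial.aeval a (-(Polynomial.C o * (p + Polynomial.X * q))) * (g * x₁) ∈ J := by
  convert J.sub_mem (J.mul_mem_left (a ^ 2 - algebraMap ℝ A k) hpq)
    (J.mul_mem_left (Polynomial.aeval a p + a * Polynomial.aeval a q) hx₄) using 1
  simp only [h₄, h₃, map_neg, map_mul, map_add, Polynomial.aeval_C, Polynomial.aeval_X]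
  ring

theorem mem_of_lift_step {y₀ y₁ : A} {c : ℝ}
    (h₁ : x₁ = a * x₀ + algebraMap ℝ A e * (g * y₀))
    (h₂ : x₂ = a * x₁ - algebraMap ℝ A (c ^ 2) * x₀ + algebraMap ℝ A o * (g * y₁))
    (hy₀ : g * y₀ ∈ J) (hy₁ : g * y₁ ∈ J) (hx₂ : x₂ ∈ J)
    (hpq : Polynomial.aeval a p * x₀ + Polynomial.aeval a q * x₁ ∈ J)
    (hc₁ : (p + Polynomial.X * q).eval c ≠ 0) (hc₂ : (p + Polynomial.X * q).eval (-c) ≠ 0) :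
    x₀ ∈ J ∧ x₁ ∈ J := by
  have hx₀ : x₀ ∈ J := by
    refine mem_of_isCoprime
      ((isCoprime_X_sq_sub_C_sq hc₁ hc₂).map (Polynomial.aeval (R := ℝ) a).toRingHom) ?_ ?_
    · convert J.sub_mem hpq (J.mul_mem_left (Polynomial.aeval a q * algebraMap ℝ A e) hy₀) using 1
      simp only [AlgHom.toRingHom_eq_coe, RingHom.coe_coe, h₁, map_add, map_mul, Polynomial.aeval_X]
      ring
    · convert J.sub_mem (J.sub_mem hx₂ (J.mul_mem_left (a * algebraMap ℝ A e) hy₀))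
        (J.mul_mem_left (algebraMap ℝ A o) hy₁) using 1
      simp only [AlgHom.toRingHom_eq_coe, RingHom.coe_coe, h₂, h₁, map_sub, map_pow,
        Polynomial.aeval_X, Polynomial.aeval_C]
      ring
  exact ⟨hx₀, h₁ ▸ J.add_mem (J.mul_mem_left a hx₀) (J.mul_mem_left _ hy₀)⟩

end Elimination

theorem zm_two_mul_add_three (i : ℕ) :
    zm (2 * i + 3) = X 0 * zm (2 * i + 2)
      + algebraMap ℝ _ (2 * (2 * i + 2) * (2 * i + 1)) * (X 1 * zm (2 * i)) := by
  rw [zm, if_pos (Nat.mul_mod_right 2 i)]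
  simp only [MvPolynomial.algebraMap_apply, Complex.coe_algebraMap]
  push_cast
  simp only [map_add, map_mul, map_natCast, map_ofNat, map_one]
  ring

theorem zm_two_mul_add_four (i : ℕ) :
    zm (2 * i + 4) = X 0 * zm (2 * i + 3) - algebraMap ℝ _ ((4 * (2 * i + 3)) ^ 2) * zm (2 * i + 2)
      + algebraMap ℝ _ (2 * (2 * i + 3) * (2 * i + 2)) * (X 1 * zm (2 * i + 1)) := by
  rw [show 2 * i + 4 = 2 * i + 1 + 3 from rfl, zm, if_neg (by omega)]
  simp only [MvPolynomial.algebraMap_apply, Complex.coe_algebraMap]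
  push_cast
  simp only [map_add, map_mul, map_pow, map_natCast, map_ofNat, map_one]
  ring

theorem zm_mem_Jm {g k : ℕ} (h₁ : g ≤ k) (h₂ : k ≤ g + 2) : zm k ∈ Jm g := by
  obtain rfl | rfl | rfl : k = g ∨ k = g + 1 ∨ k = g + 2 := by omega
  all_goals exact Ideal.subset_span (by simp)

theorem X_one_mul_zm_mem_Jm (n : ℕ) : X 1 * zm (2 * n) ∈ Jm (2 * n + 1) := by
  have h : zm (2 * n + 3) - X 0 * zm (2 * n + 2) ∈ Jm (2 * n + 1) :=
    sub_mem (zm_mem_Jm (by omega) le_rfl) (Ideal.mul_mem_left _ _ (zm_mem_Jm (by omega) (by omega)))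
  rw [zm_two_mul_add_three, add_sub_cancel_left] at h
  exact mem_of_algebraMap_mul_mem (by positivity) h

theorem X_one_sq_mul_mem_Jm {n : ℕ} {x : MvPolynomial (Fin 2) ℂ} (hx : x ∈ Jm (2 * n + 1)) :
    X 1 ^ 2 * x ∈ Jm (2 * (n + 1) + 1) := by
  set J := Jm (2 * (n + 1) + 1)
  have hγ : X 1 * zm (2 * n + 2) ∈ J := X_one_mul_zm_mem_Jm (n + 1)
  have h₁ : algebraMap ℝ _ (2 * (2 * n + 3) * (2 * n + 2)) * (X 1 ^ 2 * zm (2 * n + 1)) ∈ J := by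
    convert add_mem
      (sub_mem (J.mul_mem_left (X 1) (zm_mem_Jm (k := 2 * n + 4) (by omega) (by omega)))
        (J.mul_mem_left (X 0 * X 1) (zm_mem_Jm (k := 2 * n + 3) (by omega) (by omega))))
      (J.mul_mem_left (algebraMap ℝ _ ((4 * (2 * n + 3)) ^ 2)) hγ) using 1
    rw [zm_two_mul_add_four]
    ring
  have h₂ : X 1 ^ 2 * zm (2 * n + 2) ∈ J := by
    rw [sq, mul_assoc]
    exact J.mul_mem_left _ hγ
  have h₃ : X 1 ^ 2 * zm (2 * n + 3) ∈ J := J.mul_mem_left _ (zm_mem_Jm (by omega) (by omega))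
  suffices Jm (2 * n + 1) ≤ J.colon {X 1 ^ 2} by
    simpa [mul_comm] using Submodule.mem_colon_singleton.1 (this hx)
  refine Ideal.span_le.2 ?_
  rintro _ (rfl | rfl | rfl) <;>
    rw [SetLike.mem_coe, Submodule.mem_colon_singleton, smul_eq_mul, mul_comm]
  exacts [mem_of_algebraMap_mul_mem (by positivity) h₁, h₂, h₃]

theorem Jm_two_mul_add_one_le (m : ℕ) : Jm (2 * m + 1) ≤ Jm (2 * m) := by
  refine Ideal.span_le.2 ?_
  rintro _ (rfl | rfl | rfl)
  · exact zm_mem_Jm (by omega) (by omega)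
  · exact zm_mem_Jm (by omega) (by omega)
  · rw [SetLike.mem_coe, show 2 * m + 1 + 2 = 2 * m + 3 from rfl, zm_two_mul_add_three]
    exact add_mem (Ideal.mul_mem_left _ _ (zm_mem_Jm (by omega) (by omega)))
      (Ideal.mul_mem_left _ _ (Ideal.mul_mem_left _ _ (zm_mem_Jm le_rfl (by omega))))

def AntidiagonalMem (n d : ℕ) : Prop :=
  ∀ i j, i + j = d → X 1 ^ j * zm (2 * i) ∈ Jm (2 * n + 1)

theorem antidiagonalMem_succ {n : ℕ} (h : ∀ m, m + 1 = n → AntidiagonalMem m m) :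
    AntidiagonalMem n (n + 1) := by
  rintro i (_ | _ | j) hij
  · rw [pow_zero, one_mul]
    exact zm_mem_Jm (by omega) (by omega)
  · obtain rfl : i = n := by omega
    rw [pow_one]
    exact X_one_mul_zm_mem_Jm _
  · obtain ⟨m, rfl⟩ : ∃ m, n = m + 1 := ⟨n - 1, by omega⟩
    have := X_one_sq_mul_mem_Jm (h m rfl i j (by omega))
    rwa [← mul_assoc, ← pow_add, Nat.add_comm 2 j] at this

section

variable {n : ℕ}

theorem exists_signPattern_mem (hnext : AntidiagonalMem n (n + 1)) :
    ∀ j i, i + j = n → ∃ p q : ℝ[X], SignPattern j p q ∧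
      Polynomial.aeval (X 0) p * (X 1 ^ j * zm (2 * i))
        + Polynomial.aeval (X 0) q * (X 1 ^ j * zm (2 * i + 1)) ∈ Jm (2 * n + 1) := by
  intro j
  induction j with
  | zero =>
    rintro i rfl
    exact ⟨0, 1, SignPattern.zero_one, by simpa using zm_mem_Jm le_rfl (by omega)⟩
  | succ j ih =>
    intro i hij
    obtain ⟨p, q, hpq, hmem⟩ := ih (i + 1) (by omega)
    have h₃ : X 1 ^ j * zm (2 * i + 3) = X 0 * (X 1 ^ j * zm (2 * i + 2))
        + algebraMap ℝ _ (2 * (2 * i + 2) * (2 * i + 1)) * (X 1 * (X 1 ^ j * zm (2 * i))) := by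
      rw [zm_two_mul_add_three]; ring
    have h₄ : X 1 ^ j * zm (2 * i + 4) = X 0 * (X 1 ^ j * zm (2 * i + 3))
        - algebraMap ℝ _ ((4 * (2 * i + 3)) ^ 2) * (X 1 ^ j * zm (2 * i + 2))
        + algebraMap ℝ _ (2 * (2 * i + 3) * (2 * i + 2)) * (X 1 * (X 1 ^ j * zm (2 * i + 1))) := by
      rw [zm_two_mul_add_four]; ring
    have hmem' := elim_step_mem h₃ h₄ hmem (hnext (i + 2) j (by omega))
    simp only [← mul_assoc (X 1 : MvPolynomial (Fin 2) ℂ), ← pow_succ'] at hmem'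
    exact ⟨_, _, hpq.step (by positivity) (by positivity) (by positivity), hmem'⟩

theorem X_one_pow_mul_zm_mem_of_lower (hnext : AntidiagonalMem n (n + 1)) {i j : ℕ}
    (hij : i + j = n) {y₀ y₁ : MvPolynomial (Fin 2) ℂ} {e o c : ℝ} (hc : c ≠ 0)
    (h₁ : zm (2 * i + 1) = X 0 * zm (2 * i) + algebraMap ℝ _ e * (X 1 * y₀))
    (h₂ : zm (2 * i + 2) = X 0 * zm (2 * i + 1) - algebraMap ℝ _ (c ^ 2) * zm (2 * i)
      + algebraMap ℝ _ o * (X 1 * y₁))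
    (hy₀ : X 1 ^ (j + 1) * y₀ ∈ Jm (2 * n + 1)) (hy₁ : X 1 ^ (j + 1) * y₁ ∈ Jm (2 * n + 1)) :
    X 1 ^ j * zm (2 * i) ∈ Jm (2 * n + 1) ∧ X 1 ^ j * zm (2 * i + 1) ∈ Jm (2 * n + 1) := by
  obtain ⟨p, q, hpq, hmem⟩ := exists_signPattern_mem hnext j i hij
  have hx₂ : X 1 ^ j * zm (2 * i + 2) ∈ Jm (2 * n + 1) := hnext (i + 1) j (by omega)
  rw [pow_succ', mul_assoc] at hy₀ hy₁
  exact mem_of_lift_step (e := e) (o := o) (by rw [h₁]; ring) (by rw [h₂]; ring) hy₀ hy₁ hx₂ hmem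
    (hpq.eval_ne_zero hc) (hpq.eval_ne_zero (neg_ne_zero.2 hc))

theorem X_one_pow_mul_zm_mem (hnext : AntidiagonalMem n (n + 1)) : ∀ i j, i + j = n →
    X 1 ^ j * zm (2 * i) ∈ Jm (2 * n + 1) ∧ X 1 ^ j * zm (2 * i + 1) ∈ Jm (2 * n + 1) := by
  intro i
  induction i with
  | zero =>
    intro j hj
    -- the recurrences hold at i = 0 with ζ₋₂ = ζ₋₁ = 0
    refine X_one_pow_mul_zm_mem_of_lower hnext hj (y₀ := 0) (y₁ := 0) (e := 0) (o := 0) (c := 4)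
      (by norm_num) ?_ ?_ (by simp) (by simp)
    · simp [zm]
    · norm_num [zm, ← C_pow]
  | succ i ih =>
    intro j hij
    obtain ⟨h₀, h₁⟩ := ih (j + 1) (by omega)
    exact X_one_pow_mul_zm_mem_of_lower hnext hij (by positivity) (zm_two_mul_add_three i)
      (zm_two_mul_add_four i) h₀ h₁

end

theorem antidiagonalMem_self (n : ℕ) : AntidiagonalMem n n := by
  have of_succ {n : ℕ} (hnext : AntidiagonalMem n (n + 1)) : AntidiagonalMem n n :=
    fun i j hij => (X_one_pow_mul_zm_mem hnext i j hij).1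
  induction n with
  | zero => exact of_succ (antidiagonalMem_succ fun m h => absurd h m.succ_ne_zero)
  | succ n ih => exact of_succ (antidiagonalMem_succ fun m h => Nat.succ.inj h ▸ ih)

theorem Jm_odd_eq_pred_general (g : ℕ) (hodd : Odd g) :
    Jm g = Jm (g - 1) ∧ zm (g - 1) ∈ Jm g := by
  obtain ⟨m, rfl⟩ := hodd
  rw [Nat.add_sub_cancel]
  have hmem : zm (2 * m) ∈ Jm (2 * m + 1) := by simpa using antidiagonalMem_self m m 0 rfl
  refine ⟨le_antisymm (Jm_two_mul_add_one_le m) (Ideal.span_le.2 ?_), hmem⟩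
  rintro _ (rfl | rfl | rfl)
  exacts [hmem, zm_mem_Jm le_rfl (by omega), zm_mem_Jm (by omega) (by omega)]

/-- For g ≥ 1 odd, J_g^- = J_{g−1}^-; equivalently, ζ_{g−1}^- ∈ J_g^-. -/
theorem Jm_odd_eq_pred (g : ℕ) (hg : 1 ≤ g) (hodd : Odd g) :
    Jm g = Jm (g - 1) ∧ zm (g - 1) ∈ Jm g :=
  Jm_odd_eq_pred_general g hodd
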